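/- Let G be a prime graph and S ⊆ V(G). If S is not a clique, then the t-convex hull of S is V(G); if S is a clique, then the t-interval of S equals S ∪ {u ∉ S : |N(u) ∩ S| ≥ 2}. -/

import Mathlib

open Set

variable {V : Type*}

/-- `p` is a triangle path: a path with no edge joining vertices at index
distance greater than 2 along the path. -/
def TPath (G : SimpleGraph V) {u v : V} (p : G.Walk u v) : Prop :=
  p.IsPath ∧ ∀ i j : ℕ, i + 2 < j →
    ∀ (hi : i < p.support.length) (hj : j < p.support.length),
      ¬ G.Adj (p.support.get ⟨i, hi⟩) (p.support.get ⟨j, hj⟩)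

/-- `p` is a monophonic (induced) path: a path with no edge joining vertices at
index distance greater than 1 along the path. -/
def MPath (G : SimpleGraph V) {u v : V} (p : G.Walk u v) : Prop :=
  p.IsPath ∧ ∀ i j : ℕ, i + 1 < j →
    ∀ (hi : i < p.support.length) (hj : j < p.support.length),
      ¬ G.Adj (p.support.get ⟨i, hi⟩) (p.support.get ⟨j, hj⟩)

/-- `p` is a geodesic (shortest path). -/
def GPath (G : SimpleGraph V) {u v : V} (p : G.Walk u v) : Prop :=
  p.IsPath ∧ ∀ q : G.Walk u v, p.length ≤ q.length

/-- `S` is convex in the triangle path convexity. -/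
def TConvex (G : SimpleGraph V) (S : Set V) : Prop :=
  ∀ ⦃u v : V⦄, u ∈ S → v ∈ S → ∀ p : G.Walk u v, TPath G p → ∀ w ∈ p.support, w ∈ S

/-- `S` is convex in the monophonic convexity. -/
def MConvex (G : SimpleGraph V) (S : Set V) : Prop :=
  ∀ ⦃u v : V⦄, u ∈ S → v ∈ S → ∀ p : G.Walk u v, MPath G p → ∀ w ∈ p.support, w ∈ S

/-- `S` is convex in the geodetic convexity. -/
def GConvex (G : SimpleGraph V) (S : Set V) : Prop :=
  ∀ ⦃u v : V⦄, u ∈ S → v ∈ S → ∀ p : G.Walk u v, GPath G p → ∀ w ∈ p.support, w ∈ S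

/-- `S` is `P₃`-convex: no vertex outside `S` has two neighbours in `S`. -/
def P3Convex (G : SimpleGraph V) (S : Set V) : Prop :=
  ∀ w ∉ S, ∀ a ∈ S, ∀ b ∈ S, G.Adj w a → G.Adj w b → a = b

/-- The triangle path interval of `S`. -/
def TInterval (G : SimpleGraph V) (S : Set V) : Set V :=
  S ∪ {w | ∃ u ∈ S, ∃ v ∈ S, ∃ p : G.Walk u v, TPath G p ∧ w ∈ p.support}

/-- The monophonic interval of `S`. -/
def MInterval (G : SimpleGraph V) (S : Set V) : Set V :=
  S ∪ {w | ∃ u ∈ S, ∃ v ∈ S, ∃ p : G.Walk u v, MPath G p ∧ w ∈ p.support}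

/-- The geodetic interval of `S`. -/
def GInterval (G : SimpleGraph V) (S : Set V) : Set V :=
  S ∪ {w | ∃ u ∈ S, ∃ v ∈ S, ∃ p : G.Walk u v, GPath G p ∧ w ∈ p.support}

/-- The `P₃`-interval of `S`: `S` together with the vertices having at least two
neighbours in `S`. -/
def P3Interval (G : SimpleGraph V) (S : Set V) : Set V :=
  S ∪ {w | w ∉ S ∧ ∃ a ∈ S, ∃ b ∈ S, a ≠ b ∧ G.Adj w a ∧ G.Adj w b}

/-- The convex hull of `S` in the triangle path convexity. -/
def THull (G : SimpleGraph V) (S : Set V) : Set V :=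
  ⋂₀ {C : Set V | S ⊆ C ∧ TConvex G C}

/-- The convex hull of `S` in the monophonic convexity. -/
def MHull (G : SimpleGraph V) (S : Set V) : Set V :=
  ⋂₀ {C : Set V | S ⊆ C ∧ MConvex G C}

/-- The convex hull of `S` in the geodetic convexity. -/
def GHull (G : SimpleGraph V) (S : Set V) : Set V :=
  ⋂₀ {C : Set V | S ⊆ C ∧ GConvex G C}

/-- `K` separates the vertices `a` and `b`: both lie outside `K` and every walk
between them meets `K`. -/
def Separates (G : SimpleGraph V) (K : Set V) (a b : V) : Prop :=
  a ∉ K ∧ b ∉ K ∧ ∀ p : G.Walk a b, ∃ w ∈ p.support, w ∈ K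

/-- `K` is a separator of `G`. -/
def IsSeparator (G : SimpleGraph V) (K : Set V) : Prop :=
  ∃ a b : V, Separates G K a b

/-- `G` is prime: it has no clique separator. -/
def IsPrime (G : SimpleGraph V) : Prop :=
  ¬ ∃ C : Set V, G.IsClique C ∧ IsSeparator G C

/-- `K` is a minimal separator for `a` and `b`. -/
def IsMinSeparator (G : SimpleGraph V) (K : Set V) (a b : V) : Prop :=
  Separates G K a b ∧ ∀ K' : Set V, K' ⊂ K → ¬ Separates G K' a b

/-- `W` induces a maximal prime subgraph of `G`. -/
def IsMPSubgraph (G : SimpleGraph V) (W : Set V) : Prop :=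
  IsPrime (G.induce W) ∧ ∀ W' : Set V, W ⊆ W' → IsPrime (G.induce W') → W' = W

/-- `C` is the vertex set of a connected component of `G - S`. -/
def IsCompOf (G : SimpleGraph V) (S C : Set V) : Prop :=
  C.Nonempty ∧ C ∩ S = ∅ ∧
  (∀ x ∈ C, ∀ y ∈ C, ∃ p : G.Walk x y, ∀ w ∈ p.support, w ∈ C) ∧
  (∀ x ∈ C, ∀ y : V, y ∉ S → G.Adj x y → y ∈ C)

/-!
If the t-convex hull `H` of `S` misses a vertex `z`, let `D` be the component of `G - H`
containing `z`. Two nonadjacent neighbours of `D` in `H` would be joined by an induced path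
through `D`; induced paths are triangle paths, so convexity would put a vertex of `D` into `H`.
Hence the neighbourhood of `D` is a clique, and it separates `z` from every vertex of `H` outside
it. Such a vertex exists unless `H`, and with it `S`, is a clique, so primality forces `H = V`.
For a clique `S`, a triangle path between two adjacent ends has length at most two.
-/

namespace SimpleGraph.Walk

variable {G : SimpleGraph V} {u v : V}

lemma exists_shortcut_of_adj_getVert (p : G.Walk u v) {i j : ℕ} (hij : i < j) (hj : j ≤ p.length)
    (hadj : G.Adj (p.getVert i) (p.getVert j)) :
    ∃ q : G.Walk u v, q.length = i + 1 + (p.length - j) ∧ q.support ⊆ p.support := by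
  refine ⟨(p.take i).append (cons hadj (p.drop j)), by simp; omega, ?_⟩
  intro w hw
  simp only [support_append, support_cons, support_take, drop_support_eq_support_drop_min,
    List.tail_cons, List.mem_append] at hw
  rcases hw with hw | hw
  · exact List.mem_of_mem_take hw
  · exact List.mem_of_mem_drop hw

end SimpleGraph.Walk

open SimpleGraph

section Paths

variable {G : SimpleGraph V} {u v : V}

lemma mPath_iff_getVert (p : G.Walk u v) :
    MPath G p ↔ p.IsPath ∧
      ∀ i j : ℕ, i + 1 < j → j ≤ p.length → ¬ G.Adj (p.getVert i) (p.getVert j) := by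
  simp only [MPath, List.get_eq_getElem, Walk.support_getElem_eq_getVert, Walk.length_support,
    Nat.lt_succ_iff]
  constructor
  · exact fun ⟨hp, h⟩ ↦ ⟨hp, fun i j hij hj ↦ h i j hij (by omega) hj⟩
  · exact fun ⟨hp, h⟩ ↦ ⟨hp, fun i j hij _ hj ↦ h i j hij hj⟩

lemma MPath.tPath {p : G.Walk u v} (hp : MPath G p) : TPath G p :=
  ⟨hp.1, fun i j hij ↦ hp.2 i j (by omega)⟩

lemma exists_mPath_support_subset (p : G.Walk u v) :
    ∃ q : G.Walk u v, MPath G q ∧ q.support ⊆ p.support := by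
  classical
  induction hn : p.length using Nat.strong_induction_on generalizing p with
  | _ n ih =>
  by_cases hchord : ∃ i j : ℕ, i + 1 < j ∧ j ≤ p.bypass.length ∧
      G.Adj (p.bypass.getVert i) (p.bypass.getVert j)
  · obtain ⟨i, j, hij, hj, hadj⟩ := hchord
    obtain ⟨r, hr, hrp⟩ := p.bypass.exists_shortcut_of_adj_getVert (by omega) hj hadj
    obtain ⟨q, hq, hqr⟩ := ih r.length (by have := p.length_bypass_le_length; omega) r rfl
    exact ⟨q, hq, List.Subset.trans hqr (List.Subset.trans hrp p.support_bypass_subset_support)⟩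
  · push Not at hchord
    exact ⟨p.bypass, (mPath_iff_getVert _).2 ⟨p.bypass_isPath, hchord⟩,
      p.support_bypass_subset_support⟩

lemma TPath.length_le_two_of_adj {p : G.Walk u v} (hp : TPath G p) (huv : G.Adj u v) :
    p.length ≤ 2 := by
  by_contra! h
  refine hp.2 0 p.length h (by simp) (by simp) ?_
  simpa [Walk.support_getElem_eq_getVert] using huv

lemma tPath_cons_cons {a m b : V} (ham : G.Adj a m) (hmb : G.Adj m b) (hab : a ≠ b) :
    TPath G (Walk.cons ham (Walk.cons hmb Walk.nil)) := by
  refine ⟨by simp [ham.ne, hmb.ne, hab], fun i j hij _ hj ↦ ?_⟩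
  simp at hj
  omega

end Paths

section Convexity

variable {G : SimpleGraph V} {C D : Set V}

lemma TConvex.mConvex (hC : TConvex G C) : MConvex G C :=
  fun _ _ hu hv p hp ↦ hC hu hv p hp.tPath

lemma subset_tHull (S : Set V) : S ⊆ THull G S :=
  fun _ hs ↦ Set.mem_sInter.2 fun _ hT ↦ hT.1 hs

lemma tConvex_tHull (S : Set V) : TConvex G (THull G S) :=
  fun _ _ hu hv p hp w hw ↦ Set.mem_sInter.2 fun T hT ↦
    hT.2 (Set.mem_sInter.1 hu T hT) (Set.mem_sInter.1 hv T hT) p hp w hw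

def neighborsIn (G : SimpleGraph V) (D C : Set V) : Set V :=
  {k | k ∈ C ∧ ∃ d ∈ D, G.Adj d k}

lemma neighborsIn_subset : neighborsIn G D C ⊆ C := fun _ hk ↦ hk.1

lemma exists_isCompOf_mem {z : V} (hz : z ∉ C) : ∃ D, IsCompOf G C D ∧ z ∈ D := by
  classical
  set D := {y | ∃ p : G.Walk z y, ∀ w ∈ p.support, w ∉ C}
  have support_mem : ∀ {y} (p : G.Walk z y), (∀ w ∈ p.support, w ∉ C) → ∀ w ∈ p.support, w ∈ D :=
    fun p hp w hw ↦ ⟨p.takeUntil w hw, fun t ht ↦ hp t (p.support_takeUntil_subset_support hw ht)⟩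
  have hzD : z ∈ D := ⟨Walk.nil, by simpa using hz⟩
  refine ⟨D, ⟨⟨z, hzD⟩, ?_, ?_, ?_⟩, hzD⟩
  · exact Set.eq_empty_iff_forall_notMem.2 fun y ⟨⟨p, hp⟩, hyC⟩ ↦ hp y p.end_mem_support hyC
  · rintro x ⟨p, hp⟩ y ⟨q, hq⟩
    refine ⟨p.reverse.append q, fun w hw ↦ ?_⟩
    rw [Walk.mem_support_append_iff, Walk.support_reverse, List.mem_reverse] at hw
    exact hw.elim (support_mem p hp w) (support_mem q hq w)
  · rintro x ⟨p, hp⟩ y hyC hxy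
    refine support_mem (p.concat hxy) (fun w hw ↦ ?_) y (p.concat hxy).end_mem_support
    rw [Walk.support_concat, List.mem_append, List.mem_singleton] at hw
    exact hw.elim (hp w) (· ▸ hyC)

lemma IsCompOf.exists_mem_support_neighborsIn (hD : IsCompOf G C D) {x y : V}
    (p : G.Walk x y) (hx : x ∈ D) (hy : y ∉ D) : ∃ w ∈ p.support, w ∈ neighborsIn G D C := by
  induction p with
  | nil => exact absurd hx hy
  | @cons x w y hxw p ih =>
    by_cases hw : w ∈ D
    · obtain ⟨t, ht, htK⟩ := ih hw hy
      exact ⟨t, List.mem_cons_of_mem _ ht, htK⟩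
    · have hwC : w ∈ C := by_contra fun hwC ↦ hw (hD.2.2.2 x hx w hwC hxw)
      exact ⟨w, by simp, hwC, x, hx, hxw⟩

lemma IsCompOf.isClique_neighborsIn (hC : MConvex G C) (hD : IsCompOf G C D) :
    G.IsClique (neighborsIn G D C) := by
  rintro x ⟨hxC, d₁, hd₁, hd₁x⟩ y ⟨hyC, d₂, hd₂, hd₂y⟩ hxy
  by_contra hnxy
  obtain ⟨r, hr⟩ := hD.2.2.1 d₁ hd₁ d₂ hd₂
  obtain ⟨q, hq, hqs⟩ := exists_mPath_support_subset
    (Walk.cons hd₁x.symm (r.append (Walk.cons hd₂y Walk.nil)))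
  have hq_nil : ¬ q.Nil := fun h ↦ hxy h.eq
  have hxw : G.Adj x (q.getVert 1) := q.adj_snd hq_nil
  have hwC : q.getVert 1 ∈ C := hC hxC hyC q hq _ (q.getVert_mem_support 1)
  have hw := hqs (q.getVert_mem_support 1)
  generalize q.getVert 1 = w at hxw hwC hw
  have hwD : w ∈ D := by
    simp only [Walk.support_cons, Walk.support_append, Walk.support_nil, List.tail_cons,
      List.mem_cons, List.mem_append, List.not_mem_nil, or_false] at hw
    rcases hw with rfl | hw | rfl
    · exact absurd hxw G.irrefl
    · exact hr _ hw
    · exact absurd hxw hnxy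
  exact Set.eq_empty_iff_forall_notMem.1 hD.2.1 w ⟨hwD, hwC⟩

lemma MConvex.isClique_of_ne_univ (hG : IsPrime G) (hC : MConvex G C) (hne : C ≠ Set.univ) :
    G.IsClique C := by
  obtain ⟨z, hz⟩ := (Set.ne_univ_iff_exists_notMem C).1 hne
  obtain ⟨D, hD, hzD⟩ := exists_isCompOf_mem (G := G) hz
  have hK := hD.isClique_neighborsIn hC
  by_contra hnC
  obtain ⟨c, hcC, hcK⟩ : ∃ c ∈ C, c ∉ neighborsIn G D C := by
    by_contra! h
    exact hnC (hK.subset h)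
  refine hG ⟨_, hK, c, z, hcK, fun hzK ↦ ?_, fun p ↦ ?_⟩
  · exact Set.eq_empty_iff_forall_notMem.1 hD.2.1 z ⟨hzD, neighborsIn_subset hzK⟩
  · obtain ⟨w, hw, hwK⟩ := hD.exists_mem_support_neighborsIn p.reverse hzD
      fun hcD ↦ Set.eq_empty_iff_forall_notMem.1 hD.2.1 c ⟨hcD, hcC⟩
    exact ⟨w, by simpa using hw, hwK⟩

end Convexity

section Intervals

variable {G : SimpleGraph V} {S : Set V}

lemma tInterval_eq_p3Interval (hS : G.IsClique S) : TInterval G S = P3Interval G S := by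
  ext w
  constructor
  · rintro (hw | ⟨u, hu, v, hv, p, hp, hwp⟩)
    · exact Or.inl hw
    by_cases hwS : w ∈ S
    · exact Or.inl hwS
    refine Or.inr ⟨hwS, u, hu, v, hv, ?_⟩
    rcases eq_or_ne u v with rfl | huv
    · rw [(Walk.isPath_iff_nil.1 hp.1).eq_nil, Walk.support_nil, List.mem_singleton] at hwp
      exact absurd (hwp ▸ hu) hwS
    have hlen := hp.length_le_two_of_adj (hS hu hv huv)
    rcases p with _ | ⟨hum, _ | ⟨hmv, _ | ⟨h, p⟩⟩⟩
    · exact absurd rfl huv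
    · simp only [Walk.support_cons, Walk.support_nil, List.mem_cons, List.not_mem_nil,
        or_false] at hwp
      rcases hwp with rfl | rfl <;> contradiction
    · simp only [Walk.support_cons, Walk.support_nil, List.mem_cons, List.not_mem_nil,
        or_false] at hwp
      rcases hwp with rfl | rfl | rfl
      · contradiction
      · exact ⟨huv, hum.symm, hmv⟩
      · contradiction
    · simp at hlen
  · rintro (hw | ⟨-, a, ha, b, hb, hab, hwa, hwb⟩)
    · exact Or.inl hw
    exact Or.inr ⟨a, ha, b, hb, _, tPath_cons_cons hwa.symm hwb hab, by simp⟩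

end Intervals

theorem stmt_18_general (G : SimpleGraph V)
    (hprime : IsPrime G) (S : Set V) :
    (¬ G.IsClique S → THull G S = Set.univ) ∧
    (G.IsClique S →
      TInterval G S =
        S ∪ {u | u ∉ S ∧ ∃ a ∈ S, ∃ b ∈ S, a ≠ b ∧ G.Adj u a ∧ G.Adj u b}) := by
  refine ⟨fun hS ↦ ?_, tInterval_eq_p3Interval⟩
  by_contra hne
  exact hS (((tConvex_tHull S).mConvex.isClique_of_ne_univ hprime hne).subset (subset_tHull S))

theorem stmt_18 [Fintype V] (G : SimpleGraph V) (hconn : G.Connected)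
    (hprime : IsPrime G) (S : Set V) :
    (¬ G.IsClique S → THull G S = Set.univ) ∧
    (G.IsClique S →
      TInterval G S =
        S ∪ {u | u ∉ S ∧ ∃ a ∈ S, ∃ b ∈ S, a ≠ b ∧ G.Adj u a ∧ G.Adj u b}) :=
  stmt_18_general G hprime S
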